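/- arXiv:1905.09725 — 5 statements merged into one kernel-verified Lean document; each statement's English description precedes it below -/
import Mathlib

section
/- Let (X,d) be a complete metric space, let p and L be positive integers, for each i ∈ {1,...,L} let f_i : X^p → X be a contraction with respect to the maximum metric on X^p, and let A be the unique nonempty compact set with A = ⋃_{i=1}^{L} f_i(A × ... × A). If (K_n)_{n≥1} is any sequence of nonempty compact subsets of X such that K_{n+p} = ⋃_{i=1}^{L} f_i(K_n × K_{n+1} × ... × K_{n+p-1}) for every n ≥ 1, then (K_n) converges to A with respect to the Hausdorff–Pompeiu metric. -/
/-!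
The Hausdorff edistance is subadditive under unions, coordinatewise controlled on products for
the maximum metric, and scaled by at most `c` under a `c`-Lipschitz map. Hence, with `c < 1` a
common Lipschitz constant of the `f i` and `dₙ = h(Kₙ, A)`, the recursion for `Kₙ` and the
fixed-point equation for `A` give `d_{n+p} ≤ c · max(dₙ, …, d_{n+p-1})`, so `dₙ` decays like
`c ^ (n / p)`.
-/

open Set Filter Topology Metric
open scoped ENNReal NNReal

namespace Metric

variable {α β : Type*} [PseudoEMetricSpace α] [PseudoEMetricSpace β]

theorem infEDist_pi_le_iSup {ι : Type*} [Fintype ι] {X : ι → Type*}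
    [∀ i, PseudoEMetricSpace (X i)] (x : ∀ i, X i) (T : ∀ i, Set (X i)) :
    infEDist x (univ.pi T) ≤ ⨆ i, infEDist (x i) (T i) := by
  refine ENNReal.le_of_forall_pos_le_add fun ε hε hlt => ?_
  have hnear : ∀ i, infEDist (x i) (T i) < (⨆ i, infEDist (x i) (T i)) + ε := fun i =>
    (le_iSup (fun i => infEDist (x i) (T i)) i).trans_lt
      (ENNReal.lt_add_right hlt.ne (by exact_mod_cast hε.ne'))
  choose y hyT hxy using fun i => infEDist_lt_iff.1 (hnear i)
  exact (infEDist_le_edist_of_mem (s := univ.pi T) fun i _ => hyT i).trans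
    (edist_pi_le_iff.2 fun i => (hxy i).le)

theorem hausdorffEDist_pi_le {ι : Type*} [Fintype ι] {X : ι → Type*}
    [∀ i, PseudoEMetricSpace (X i)] (S T : ∀ i, Set (X i)) :
    hausdorffEDist (univ.pi S) (univ.pi T) ≤ ⨆ i, hausdorffEDist (S i) (T i) := by
  refine hausdorffEDist_le_of_infEDist (fun x hx => ?_) (fun x hx => ?_) <;>
    refine (infEDist_pi_le_iSup x _).trans (iSup_mono fun i => ?_)
  · exact infEDist_le_hausdorffEDist_of_mem (hx i (mem_univ i))
  · exact hausdorffEDist_comm (s := S i) ▸ infEDist_le_hausdorffEDist_of_mem (hx i (mem_univ i))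

theorem _root_.LipschitzWith.infEDist_image_le {K : ℝ≥0} {f : α → β} (hf : LipschitzWith K f)
    {t : Set α} (ht : t.Nonempty) (a : α) :
    infEDist (f a) (f '' t) ≤ K * infEDist a t := by
  obtain rfl | hK := eq_or_ne K 0
  · obtain ⟨y, hy⟩ := ht
    simpa using (infEDist_le_edist_of_mem (mem_image_of_mem f hy)).trans (hf a y)
  · simp only [infEDist, ENNReal.mul_iInf_of_ne (ENNReal.coe_ne_zero.2 hK) ENNReal.coe_ne_top]
    exact le_iInf₂ fun y hy => (infEDist_le_edist_of_mem (mem_image_of_mem f hy)).trans (hf a y)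

theorem _root_.LipschitzWith.hausdorffEDist_image_le {K : ℝ≥0} {f : α → β}
    (hf : LipschitzWith K f) {s t : Set α} (hs : s.Nonempty) (ht : t.Nonempty) :
    hausdorffEDist (f '' s) (f '' t) ≤ K * hausdorffEDist s t := by
  refine hausdorffEDist_le_of_infEDist ?_ ?_ <;> rintro _ ⟨a, ha, rfl⟩
  · exact (hf.infEDist_image_le ht a).trans (by gcongr; exact infEDist_le_hausdorffEDist_of_mem ha)
  · rw [hausdorffEDist_comm]
    exact (hf.infEDist_image_le hs a).trans (by gcongr; exact infEDist_le_hausdorffEDist_of_mem ha)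

theorem hausdorffEDist_iUnion_image_pi_le {X ι κ : Type*} [PseudoEMetricSpace X] [Fintype κ]
    {f : ι → (κ → X) → X} {c : ℝ≥0} (hf : ∀ i, LipschitzWith c (f i)) {S T : κ → Set X}
    (hS : ∀ j, (S j).Nonempty) (hT : ∀ j, (T j).Nonempty) :
    hausdorffEDist (⋃ i, f i '' univ.pi S) (⋃ i, f i '' univ.pi T) ≤
      c * ⨆ j, hausdorffEDist (S j) (T j) :=
  hausdorffEDist_iUnion_le.trans <| iSup_le fun i =>
    ((hf i).hausdorffEDist_image_le (univ_pi_nonempty_iff.2 hS) (univ_pi_nonempty_iff.2 hT)).trans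
      (by gcongr; exact hausdorffEDist_pi_le S T)

end Metric

theorem ENNReal.le_pow_div_mul_iSup_of_le_mul_iSup {d : ℕ → ℝ≥0∞} {c : ℝ≥0∞} {p : ℕ}
    (hp : 0 < p) (hc : c ≤ 1) (hrec : ∀ n, d (n + p) ≤ c * ⨆ j : Fin p, d (n + j)) (n : ℕ) :
    d n ≤ c ^ (n / p) * ⨆ j : Fin p, d j := by
  induction n using Nat.strong_induction_on with
  | _ n ih =>
    obtain hn | hn := lt_or_ge n p
    · simpa [Nat.div_eq_of_lt hn] using le_iSup (fun j : Fin p => d j) ⟨n, hn⟩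
    obtain ⟨m, rfl⟩ := Nat.exists_eq_add_of_le' hn
    calc d (m + p) ≤ c * ⨆ j : Fin p, d (m + j) := hrec m
      _ ≤ c * (c ^ (m / p) * ⨆ j : Fin p, d j) := by
        gcongr
        refine iSup_le fun j => (ih _ (by omega)).trans ?_
        gcongr ?_ * _
        exact pow_le_pow_right_of_le_one' hc (Nat.div_le_div_right (Nat.le_add_right m j))
      _ = c ^ ((m + p) / p) * ⨆ j : Fin p, d j := by
        rw [Nat.add_div_right m hp, pow_succ, mul_comm (c ^ _) c, mul_assoc]

theorem ENNReal.tendsto_atTop_zero_of_le_mul_iSup {d : ℕ → ℝ≥0∞} {c : ℝ≥0∞} {p : ℕ}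
    (hc : c < 1) (hd : ∀ n < p, d n ≠ ⊤)
    (hrec : ∀ n, d (n + p) ≤ c * ⨆ j : Fin p, d (n + j)) :
    Tendsto d atTop (𝓝 0) := by
  obtain rfl | hp := p.eq_zero_or_pos
  · have hzero : d = 0 := funext fun n => by simpa using hrec n
    rw [hzero]
    exact tendsto_const_nhds
  have hM : ⨆ j : Fin p, d j ≠ ⊤ := _root_.iSup_ne_top fun j => hd j j.isLt
  have hgeom : Tendsto (fun n => c ^ (n / p) * ⨆ j : Fin p, d j) atTop (𝓝 0) := by
    simpa using ENNReal.Tendsto.mul_const ((ENNReal.tendsto_pow_atTop_nhds_zero_of_lt_one hc).comp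
      (Nat.tendsto_div_const_atTop hp.ne')) (Or.inr hM)
  exact tendsto_of_tendsto_of_tendsto_of_le_of_le tendsto_const_nhds hgeom (fun _ => zero_le)
    (ENNReal.le_pow_div_mul_iSup_of_le_mul_iSup hp hc.le hrec)

theorem gifs_attractor_tendsto_general
    {X : Type*} [MetricSpace X]
    (p L : ℕ)
    (f : Fin L → (Fin p → X) → X)
    (C : Fin L → NNReal) (hC : ∀ i, C i < 1)
    (hf : ∀ i, LipschitzWith (C i) (f i))
    (A : Set X) (hA : A.Nonempty) (hAc : IsCompact A)
    (hAfix : A = ⋃ i, f i '' (Set.univ.pi fun _ : Fin p => A))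
    (K : ℕ → Set X) (hKne : ∀ n, (K n).Nonempty) (hKc : ∀ n, IsCompact (K n))
    (hKrec : ∀ n, 1 ≤ n →
      K (n + p) = ⋃ i, f i '' (Set.univ.pi fun j : Fin p => K (n + (j : ℕ)))) :
    Filter.Tendsto (fun n => Metric.hausdorffDist (K n) A) Filter.atTop (nhds 0) := by
  set c : ℝ≥0 := Finset.univ.sup C
  have hc : c < 1 := (Finset.sup_lt_iff zero_lt_one).2 fun i _ => hC i
  have hfc : ∀ i, LipschitzWith c (f i) := fun i =>
    (hf i).weaken (Finset.le_sup (Finset.mem_univ i))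
  have hrec : ∀ n, 1 ≤ n → hausdorffEDist (K (n + p)) A ≤
      c * ⨆ j : Fin p, hausdorffEDist (K (n + j)) A := by
    intro n hn
    conv_lhs => rw [hKrec n hn, hAfix]
    exact hausdorffEDist_iUnion_image_pi_le hfc (fun _ => hKne _) (fun _ => hA)
  have hedist : Tendsto (fun n => hausdorffEDist (K n) A) atTop (𝓝 0) := by
    refine (tendsto_add_atTop_iff_nat 1).1 (ENNReal.tendsto_atTop_zero_of_le_mul_iSup (p := p)
      (ENNReal.coe_lt_one_iff.2 hc) (fun n _ => ?_) fun n => ?_)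
    · exact hausdorffEDist_ne_top_of_nonempty_of_bounded (hKne _) hA (hKc _).isBounded
        hAc.isBounded
    · rw [Nat.add_right_comm n p 1]
      simp_rw [Nat.add_right_comm n _ 1]
      exact hrec (n + 1) le_add_self
  exact (ENNReal.tendsto_toReal ENNReal.zero_ne_top).comp hedist

/-- Theorem 2.2 (convergence part): if `A` is the unique nonempty compact attractor of a
GIFS `(f i)` of order `p`, and `(K n)` is a sequence of nonempty compact sets satisfying
`K (n+p) = ⋃ i, f i (K n × K (n+1) × ... × K (n+p-1))` for all `n ≥ 1`, then `K n → A`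
in the Hausdorff–Pompeiu metric. -/
theorem gifs_attractor_tendsto
    {X : Type*} [MetricSpace X] [CompleteSpace X]
    (p L : ℕ) (hp : 0 < p) (hL : 0 < L)
    (f : Fin L → (Fin p → X) → X)
    (C : Fin L → NNReal) (hC : ∀ i, C i < 1)
    (hf : ∀ i, LipschitzWith (C i) (f i))
    (A : Set X) (hA : A.Nonempty) (hAc : IsCompact A)
    (hAfix : A = ⋃ i, f i '' (Set.univ.pi fun _ : Fin p => A))
    (hAuniq : ∀ B : Set X, B.Nonempty → IsCompact B →
      B = ⋃ i, f i '' (Set.univ.pi fun _ : Fin p => B) → B = A)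
    (K : ℕ → Set X) (hKne : ∀ n, (K n).Nonempty) (hKc : ∀ n, IsCompact (K n))
    (hKrec : ∀ n, 1 ≤ n →
      K (n + p) = ⋃ i, f i '' (Set.univ.pi fun j : Fin p => K (n + (j : ℕ)))) :
    Filter.Tendsto (fun n => Metric.hausdorffDist (K n) A) Filter.atTop (nhds 0) :=
  gifs_attractor_tendsto_general p L f C hC hf A hA hAc hAfix K hKne hKc hKrec
end

section
/- Let (X,d) be a complete metric space, let p, L be positive integers, let f_i : X^p → X (i = 1,...,L) be contractions with respect to the maximum metric on X^p with C = max{lip(f_1),...,lip(f_L)} ∈ (0,1), let G(K) = ⋃_{i=1}^{L} f_i(K × ... × K), and let A be the unique nonempty compact set with G(A) = A. Then for every ε ∈ (0,1) and every natural number k with k ≥ log_{1/C}(1/ε), one has h(G^{[k]}(K_0), A) ≤ ε · h(K_0, G(K_0)) / (1 − C) for every nonempty compact K_0 ⊆ X. -/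
/-!
`G` is a `C`-Lipschitz self-map of the space of nonempty compact subsets of `X` with the
Hausdorff metric: `K ↦ K × ⋯ × K` is `1`-Lipschitz for the maximum metric, each `f i` multiplies
Hausdorff distances by at most `C`, and a finite union does not increase them. So
`h(G^[k] K₀, A) ≤ C ^ k · h(K₀, A)`, the a priori estimate of the contraction principle gives
`h(K₀, A) ≤ h(K₀, G K₀) / (1 - C)`, and `k ≥ log_{1/C}(1/ε)` means `C ^ k ≤ ε`.
-/

open Metric Set TopologicalSpace

-- Nonemptiness of `t` matters: for `t = ∅` and `K = 0` the right-hand side is `0 * ∞ = 0`.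
theorem LipschitzWith.infEDist_image_le_s4 {α β : Type*} [PseudoEMetricSpace α]
    [PseudoEMetricSpace β] {K : NNReal} {f : α → β} (hf : LipschitzWith K f) (x : α)
    {t : Set α} (ht : t.Nonempty) : infEDist (f x) (f '' t) ≤ K * infEDist x t := by
  have := ht.to_subtype
  simp only [infEDist, iInf_image]
  rw [iInf_subtype', iInf_subtype', ENNReal.mul_iInf (by simp)]
  exact iInf_mono fun y => hf x y

theorem LipschitzWith.hausdorffEDist_image_le_s4 {α β : Type*} [PseudoEMetricSpace α]
    [PseudoEMetricSpace β] {K : NNReal} {f : α → β} (hf : LipschitzWith K f)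
    {s t : Set α} (hs : s.Nonempty) (ht : t.Nonempty) :
    hausdorffEDist (f '' s) (f '' t) ≤ K * hausdorffEDist s t := by
  refine hausdorffEDist_le_of_infEDist ?_ ?_ <;> rintro _ ⟨x, hx, rfl⟩
  · exact (hf.infEDist_image_le_s4 x ht).trans
      (by gcongr; exact infEDist_le_hausdorffEDist_of_mem hx)
  · rw [hausdorffEDist_comm]
    exact (hf.infEDist_image_le_s4 x hs).trans
      (by gcongr; exact infEDist_le_hausdorffEDist_of_mem hx)

section Pi

variable {ι : Type*} [Fintype ι] {π : ι → Type*} [∀ i, PseudoEMetricSpace (π i)]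

theorem infEDist_univ_pi_le (x : ∀ i, π i) (t : ∀ i, Set (π i)) :
    infEDist x (univ.pi t) ≤ ⨆ i, infEDist (x i) (t i) := by
  refine le_of_forall_gt fun r hr => ?_
  have hlt i : infEDist (x i) (t i) < r := (le_iSup _ i).trans_lt hr
  choose y hy hxy using fun i => infEDist_lt_iff.1 (hlt i)
  calc infEDist x (univ.pi t) ≤ edist x y := infEDist_le_edist_of_mem fun i _ => hy i
    _ < r := (Finset.sup_lt_iff (bot_le.trans_lt hr)).2 fun i _ => hxy i

theorem hausdorffEDist_univ_pi_le (s t : ∀ i, Set (π i)) :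
    hausdorffEDist (univ.pi s) (univ.pi t) ≤ ⨆ i, hausdorffEDist (s i) (t i) := by
  refine hausdorffEDist_le_of_infEDist (fun x hx => ?_) (fun x hx => ?_) <;>
    refine (infEDist_univ_pi_le x _).trans (iSup_mono fun i => ?_)
  · exact infEDist_le_hausdorffEDist_of_mem (hx i trivial)
  · rw [hausdorffEDist_comm]
    exact infEDist_le_hausdorffEDist_of_mem (hx i trivial)

end Pi

def fractalOperator {ι κ X : Type*} (f : ι → (κ → X) → X) (K : Set X) : Set X :=
  ⋃ i, f i '' univ.pi fun _ => K

section FractalOperator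

variable {ι κ X : Type*} {f : ι → (κ → X) → X} {K K' : Set X}

theorem Set.Nonempty.fractalOperator [Nonempty ι] (hK : K.Nonempty) :
    (fractalOperator f K).Nonempty :=
  ((univ_pi_nonempty_iff.2 fun _ => hK).image (f (Classical.arbitrary ι))).mono <|
    subset_iUnion (fun i => f i '' univ.pi fun _ => K) _

theorem IsCompact.fractalOperator [Finite ι] [TopologicalSpace X] (hf : ∀ i, Continuous (f i))
    (hK : IsCompact K) : IsCompact (fractalOperator f K) :=
  isCompact_iUnion fun i => (isCompact_univ_pi fun _ => hK).image (hf i)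

theorem hausdorffEDist_fractalOperator_le [Fintype κ] [PseudoEMetricSpace X] {C : NNReal}
    (hf : ∀ i, LipschitzWith C (f i)) (hK : K.Nonempty) (hK' : K'.Nonempty) :
    hausdorffEDist (fractalOperator f K) (fractalOperator f K') ≤ C * hausdorffEDist K K' :=
  calc hausdorffEDist (fractalOperator f K) (fractalOperator f K')
      ≤ ⨆ i, hausdorffEDist (f i '' univ.pi fun _ => K) (f i '' univ.pi fun _ => K') :=
        hausdorffEDist_iUnion_le
    _ ≤ C * hausdorffEDist (univ.pi fun _ : κ => K) (univ.pi fun _ => K') :=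
        iSup_le fun i => (hf i).hausdorffEDist_image_le_s4 (univ_pi_nonempty_iff.2 fun _ => hK)
          (univ_pi_nonempty_iff.2 fun _ => hK')
    _ ≤ C * hausdorffEDist K K' := by
        gcongr
        exact (hausdorffEDist_univ_pi_le _ _).trans iSup_const_le

end FractalOperator

namespace TopologicalSpace.NonemptyCompacts

variable {ι κ X : Type*} [Nonempty ι] [Finite ι]

def fractalOperator [TopologicalSpace X] (f : ι → (κ → X) → X) (hf : ∀ i, Continuous (f i))
    (K : NonemptyCompacts X) : NonemptyCompacts X :=
  ⟨⟨_root_.fractalOperator f K, K.isCompact.fractalOperator hf⟩, K.nonempty.fractalOperator⟩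

theorem coe_iterate_fractalOperator [TopologicalSpace X] {f : ι → (κ → X) → X}
    (hf : ∀ i, Continuous (f i)) (n : ℕ) (K : NonemptyCompacts X) :
    ((fractalOperator f hf)^[n] K : Set X) = (_root_.fractalOperator f)^[n] K :=
  Function.Semiconj.iterate_right (f := ((↑) : NonemptyCompacts X → Set X)) (fun _ => rfl) n
    K

theorem lipschitzWith_fractalOperator [Fintype κ] [EMetricSpace X] {f : ι → (κ → X) → X}
    {C : NNReal} (hf : ∀ i, LipschitzWith C (f i)) :
    LipschitzWith C (fractalOperator f fun i => (hf i).continuous) :=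
  fun K K' => hausdorffEDist_fractalOperator_le hf K.nonempty K'.nonempty

end TopologicalSpace.NonemptyCompacts

theorem pow_le_of_logb_one_div_le {c ε : ℝ} {k : ℕ} (hc0 : 0 < c) (hc1 : c < 1) (hε : 0 < ε)
    (hk : Real.logb (1 / c) (1 / ε) ≤ k) : c ^ k ≤ ε := by
  rwa [Real.logb_le_iff_le_rpow ((one_lt_div hc0).2 hc1) (by positivity), Real.rpow_natCast,
    one_div_pow, one_div_le_one_div hε (by positivity)] at hk

theorem gifs_deterministic_algorithm_accuracy_general
    {X : Type*} [MetricSpace X]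
    (p L : ℕ) (hL : 0 < L)
    (f : Fin L → (Fin p → X) → X)
    (C : NNReal) (hC0 : 0 < C) (hC : C < 1)
    (hf : ∀ i, LipschitzWith C (f i))
    (G : Set X → Set X)
    (hG : ∀ K, G K = ⋃ i, f i '' (Set.univ.pi fun _ : Fin p => K))
    (A : Set X) (hA : A.Nonempty) (hAc : IsCompact A) (hAfix : G A = A)
    (ε : ℝ) (hε0 : 0 < ε)
    (k : ℕ) (hk : Real.logb (1 / (C : ℝ)) (1 / ε) ≤ (k : ℝ))
    (K₀ : Set X) (hK₀ : K₀.Nonempty) (hK₀c : IsCompact K₀) :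
    Metric.hausdorffDist (G^[k] K₀) A ≤
      ε * Metric.hausdorffDist K₀ (G K₀) / (1 - (C : ℝ)) := by
  obtain rfl : G = fractalOperator f := funext hG
  have : Nonempty (Fin L) := Fin.pos_iff_nonempty.1 hL
  set F := NonemptyCompacts.fractalOperator f fun i => (hf i).continuous
  have hF : ContractingWith C F := ⟨hC, NonemptyCompacts.lipschitzWith_fractalOperator hf⟩
  let K : NonemptyCompacts X := ⟨⟨K₀, hK₀c⟩, hK₀⟩
  let A' : NonemptyCompacts X := ⟨⟨A, hAc⟩, hA⟩
  have hA' : Function.IsFixedPt F A' := NonemptyCompacts.ext hAfix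
  calc hausdorffDist ((fractalOperator f)^[k] K₀) A = dist (F^[k] K) (F^[k] A') := by
        rw [(hA'.iterate k).eq, NonemptyCompacts.dist_eq,
          NonemptyCompacts.coe_iterate_fractalOperator]
        rfl
    _ ≤ (C : ℝ) ^ k * dist K A' := by
        simpa using (hF.2.iterate k).dist_le_mul K A'
    _ ≤ ε * (dist K (F K) / (1 - C)) :=
        mul_le_mul (pow_le_of_logb_one_div_le hC0 hC hε0 hk) (hF.dist_le_of_fixedPoint K hA')
          dist_nonneg hε0.le
    _ = ε * hausdorffDist K₀ (fractalOperator f K₀) / (1 - C) := by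
        rw [NonemptyCompacts.dist_eq, mul_div_assoc]
        rfl

/-- The accuracy criterion for the deterministic algorithm (Section IV.A): if
`k ≥ log_{1/C}(1/ε)` then the `k`-th iterate of the fractal operator approximates the
attractor within `ε · h(K₀, G K₀)/(1-C)`. -/
theorem gifs_deterministic_algorithm_accuracy
    {X : Type*} [MetricSpace X] [CompleteSpace X]
    (p L : ℕ) (hp : 0 < p) (hL : 0 < L)
    (f : Fin L → (Fin p → X) → X)
    (C : NNReal) (hC0 : 0 < C) (hC : C < 1)
    (hf : ∀ i, LipschitzWith C (f i))
    (G : Set X → Set X)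
    (hG : ∀ K, G K = ⋃ i, f i '' (Set.univ.pi fun _ : Fin p => K))
    (A : Set X) (hA : A.Nonempty) (hAc : IsCompact A) (hAfix : G A = A)
    (ε : ℝ) (hε0 : 0 < ε) (hε1 : ε < 1)
    (k : ℕ) (hk : Real.logb (1 / (C : ℝ)) (1 / ε) ≤ (k : ℝ))
    (K₀ : Set X) (hK₀ : K₀.Nonempty) (hK₀c : IsCompact K₀) :
    Metric.hausdorffDist (G^[k] K₀) A ≤
      ε * Metric.hausdorffDist K₀ (G K₀) / (1 - (C : ℝ)) :=
  gifs_deterministic_algorithm_accuracy_general p L hL f C hC0 hC hf G hG A hA hAc hAfix ε hε0 k hk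
    K₀ hK₀ hK₀c
end

section
/- Let N be a positive integer, let β > 0 and C ∈ (0,1) be real numbers, and let ε_1, ..., ε_N be positive real numbers. Then Σ_{k=1}^{N} ε_k^{−β} ≥ (Σ_{k=1}^{N} C^{N−k} ε_k)^{−β} · ((1 − C^{Nβ/(β+1)}) / (1 − C^{β/(β+1)}))^{β+1}. -/
/-! With `α = β/(β+1)`, Hölder's inequality for the exponents `1` and `β` (note `1 + 1/β = 1/α`),
applied to `w_k = (w_k ε_k) · ε_k⁻¹`, gives `(∑ w_k^α)^(β+1) ≤ (∑ w_k ε_k)^β · ∑ ε_k^(-β)`.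
For the weights `w_k = C^(N-k)` the left side is a geometric sum of ratio `C^α`. -/

open Finset

theorem Finset.sum_Icc_one_pow_sub_eq {K : Type*} [Field K] {r : K} (hr : r ≠ 1) (N : ℕ) :
    ∑ k ∈ Icc 1 N, r ^ (N - k) = (1 - r ^ N) / (1 - r) := by
  rw [← Ico_add_one_right_eq_Icc, sum_Ico_eq_sum_range, Nat.add_sub_cancel,
    ← neg_div_neg_eq, neg_sub, neg_sub, ← geom_sum_eq hr, ← sum_range_reflect (r ^ ·) N]
  simp only [Nat.sub_sub]

theorem Real.rpow_sum_rpow_le_sum_mul_rpow_mul_sum_rpow_neg {ι : Type*} (s : Finset ι) {β : ℝ}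
    (hβ : 0 < β) {w x : ι → ℝ} (hw : ∀ i ∈ s, 0 ≤ w i) (hx : ∀ i ∈ s, 0 < x i) :
    (∑ i ∈ s, w i ^ (β / (β + 1))) ^ (β + 1) ≤
      (∑ i ∈ s, w i * x i) ^ β * ∑ i ∈ s, x i ^ (-β) := by
  have hT : Real.HolderTriple 1 β (β / (β + 1)) := ⟨by field_simp, one_pos, hβ⟩
  have hHolder := Real.Lr_rpow_le_Lp_mul_Lq_of_nonneg s hT
    (f := fun i => w i * x i) (g := fun i => (x i)⁻¹)
    (fun i hi => mul_nonneg (hw i hi) (hx i hi).le) (fun i hi => (inv_pos.2 (hx i hi)).le)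
  have hwx : ∀ i ∈ s, (w i * x i * (x i)⁻¹) ^ (β / (β + 1)) = w i ^ (β / (β + 1)) :=
    fun i hi => by rw [mul_inv_cancel_right₀ (hx i hi).ne']
  have hinv : ∀ i ∈ s, (x i)⁻¹ ^ β = x i ^ (-β) := fun i hi => by
    rw [Real.inv_rpow (hx i hi).le, Real.rpow_neg (hx i hi).le]
  simp only [Real.rpow_one, div_one] at hHolder
  rw [sum_congr rfl hwx, sum_congr rfl hinv] at hHolder
  have hwx0 : 0 ≤ ∑ i ∈ s, w i * x i :=
    sum_nonneg fun i hi => mul_nonneg (hw i hi) (hx i hi).le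
  have hneg0 : 0 ≤ ∑ i ∈ s, x i ^ (-β) :=
    sum_nonneg fun i hi => (Real.rpow_pos_of_pos (hx i hi) _).le
  calc (∑ i ∈ s, w i ^ (β / (β + 1))) ^ (β + 1)
      ≤ ((∑ i ∈ s, w i * x i) ^ (β / (β + 1)) *
          (∑ i ∈ s, x i ^ (-β)) ^ (β / (β + 1) / β)) ^ (β + 1) :=
        Real.rpow_le_rpow (sum_nonneg fun i hi => Real.rpow_nonneg (hw i hi) _) hHolder
          (by positivity)
    _ = (∑ i ∈ s, w i * x i) ^ β * ∑ i ∈ s, x i ^ (-β) := by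
        rw [Real.mul_rpow (by positivity) (by positivity), ← Real.rpow_mul hwx0,
          ← Real.rpow_mul hneg0]
        field_simp
        rw [Real.rpow_one]

/-- Lower bound for the constrained minimization of Section IV.B: for positive
`ε 1, ..., ε N`, `β > 0` and `C ∈ (0,1)`,
`∑ (ε k)^(-β) ≥ (∑ C^(N-k) ε k)^(-β) · ((1 - C^(Nβ/(β+1)))/(1 - C^(β/(β+1))))^(β+1)`. -/
theorem grid_minimization_lower_bound
    (N : ℕ) (hN : 0 < N) (β C : ℝ) (hβ : 0 < β) (hC0 : 0 < C) (hC1 : C < 1)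
    (ε : ℕ → ℝ) (hε : ∀ k ∈ Finset.Icc 1 N, 0 < ε k) :
    (∑ k ∈ Finset.Icc 1 N, (ε k) ^ (-β)) ≥
      (∑ k ∈ Finset.Icc 1 N, C ^ (N - k) * ε k) ^ (-β) *
        ((1 - C ^ ((N : ℝ) * β / (β + 1))) / (1 - C ^ (β / (β + 1)))) ^ (β + 1) := by
  have hS : 0 < ∑ k ∈ Icc 1 N, C ^ (N - k) * ε k :=
    sum_pos (fun k hk => mul_pos (pow_pos hC0 _) (hε k hk)) ⟨1, mem_Icc.2 ⟨le_rfl, hN⟩⟩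
  have hratio : C ^ (β / (β + 1)) ≠ 1 :=
    (Real.rpow_lt_one hC0.le hC1 (by positivity)).ne
  have hgeom : ∑ k ∈ Icc 1 N, (C ^ (N - k)) ^ (β / (β + 1)) =
      (1 - C ^ ((N : ℝ) * β / (β + 1))) / (1 - C ^ (β / (β + 1))) := by
    simp only [← Real.rpow_pow_comm hC0.le]
    rw [sum_Icc_one_pow_sub_eq hratio, ← Real.rpow_mul_natCast hC0.le, mul_comm, mul_div_assoc]
  have hHolder := Real.rpow_sum_rpow_le_sum_mul_rpow_mul_sum_rpow_neg (Icc 1 N) hβ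
    (fun k _ => pow_nonneg hC0.le (N - k)) hε
  rw [hgeom] at hHolder
  rwa [ge_iff_le, Real.rpow_neg hS.le, inv_mul_le_iff₀ (Real.rpow_pos_of_pos hS β)]
end

section
/- Let a > 1 and β > 0 be real numbers. Then for every y > a, (y^{β/(β+1)} − 1)^{β+1} · (y − a)^{−β} ≥ (a^β − 1)/a^β, and equality holds at y = a^{β+1}; that is, the function h(y) = (y^{β/(β+1)} − 1)^{β+1} (y − a)^{−β} attains its minimum on (a, ∞) at y = a^{β+1}, with minimum value (a^β − 1)/a^β. -/
/-! Write `r = β/(β+1)` and split `y = a + (y - a)` with the weights `(a^β)⁻¹` and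
`(a^β - 1)/a^β`, which sum to `1`. Concavity of `t ↦ t^r` gives
`y^r ≥ ((a^β)⁻¹)^(1-r) a^r + ((a^β-1)/a^β)^(1-r) (y-a)^r`, and the first term is exactly `1`
because `β (1 - r) = r`. Raising `y^r - 1 ≥ ((a^β-1)/a^β)^(1/(β+1)) (y-a)^r` to the power `β+1`
gives the lower bound, which a direct computation shows to be attained at `y = a^(β+1)`. -/

open Real

lemma Real.mul_div_rpow_eq {w x : ℝ} (hw : 0 < w) (hx : 0 ≤ x) (r : ℝ) :
    w * (x / w) ^ r = w ^ (1 - r) * x ^ r := by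
  rw [div_rpow hx hw.le, rpow_sub hw, rpow_one]
  field_simp

lemma Real.weighted_rpow_add_le_rpow_add {r x z w₁ w₂ : ℝ} (hr₀ : 0 ≤ r) (hr₁ : r ≤ 1)
    (hx : 0 ≤ x) (hz : 0 ≤ z) (hw₁ : 0 < w₁) (hw₂ : 0 < w₂) (hw : w₁ + w₂ = 1) :
    w₁ ^ (1 - r) * x ^ r + w₂ ^ (1 - r) * z ^ r ≤ (x + z) ^ r := by
  have h := (concaveOn_rpow hr₀ hr₁).2 (Set.mem_Ici.2 (div_nonneg hx hw₁.le))
    (Set.mem_Ici.2 (div_nonneg hz hw₂.le)) hw₁.le hw₂.le hw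
  simp only [smul_eq_mul, mul_div_cancel₀ _ hw₁.ne', mul_div_cancel₀ _ hw₂.ne'] at h
  rwa [mul_div_rpow_eq hw₁ hx, mul_div_rpow_eq hw₂ hz] at h

lemma mul_rpow_sub_le_rpow_sub_one {a β y : ℝ} (ha : 1 < a) (hβ : 0 < β) (hy : a ≤ y) :
    ((a ^ β - 1) / a ^ β) ^ (1 / (β + 1)) * (y - a) ^ (β / (β + 1)) ≤
      y ^ (β / (β + 1)) - 1 := by
  have ha₀ : 0 < a := one_pos.trans ha
  have hβ₁ : 0 < β + 1 := by linarith
  have haβ : 1 < a ^ β := one_lt_rpow ha hβ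
  have hexp : 1 - β / (β + 1) = 1 / (β + 1) := by field_simp; ring
  have hweights : (a ^ β)⁻¹ + (a ^ β - 1) / a ^ β = 1 := by field_simp; ring
  have hfirst : ((a ^ β)⁻¹) ^ (1 / (β + 1)) * a ^ (β / (β + 1)) = 1 := by
    rw [inv_rpow (rpow_nonneg ha₀.le _), ← rpow_mul ha₀.le, mul_one_div,
      inv_mul_cancel₀ (rpow_pos_of_pos ha₀ _).ne']
  have h := weighted_rpow_add_le_rpow_add (div_nonneg hβ.le hβ₁.le)
    (div_le_one_of_le₀ (by linarith) hβ₁.le) ha₀.le (sub_nonneg.2 hy)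
    (inv_pos.2 (one_pos.trans haβ)) (div_pos (by linarith) (one_pos.trans haβ)) hweights
  rw [hexp, hfirst, add_sub_cancel] at h
  linarith

lemma div_mul_rpow_sub_le_rpow_sub_one_rpow {a β y : ℝ} (ha : 1 < a) (hβ : 0 < β)
    (hy : a ≤ y) :
    (a ^ β - 1) / a ^ β * (y - a) ^ β ≤ (y ^ (β / (β + 1)) - 1) ^ (β + 1) := by
  have hβ₁ : 0 < β + 1 := by linarith
  have hw : 0 ≤ (a ^ β - 1) / a ^ β :=
    div_nonneg (by linarith [one_lt_rpow ha hβ]) (rpow_nonneg (by linarith) _)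
  have hya : 0 ≤ y - a := sub_nonneg.2 hy
  have h := rpow_le_rpow (by positivity) (mul_rpow_sub_le_rpow_sub_one ha hβ hy) hβ₁.le
  rwa [mul_rpow (by positivity) (by positivity), ← rpow_mul hw, ← rpow_mul hya,
    one_div_mul_cancel hβ₁.ne', div_mul_cancel₀ _ hβ₁.ne', rpow_one] at h

noncomputable def gridCost (a β y : ℝ) : ℝ :=
  (y ^ (β / (β + 1)) - 1) ^ (β + 1) * (y - a) ^ (-β)

lemma le_gridCost {a β y : ℝ} (ha : 1 < a) (hβ : 0 < β) (hy : a < y) :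
    (a ^ β - 1) / a ^ β ≤ gridCost a β y := by
  have hya : 0 < y - a := sub_pos.2 hy
  rw [gridCost, rpow_neg hya.le, ← div_eq_mul_inv, le_div_iff₀ (rpow_pos_of_pos hya β)]
  exact div_mul_rpow_sub_le_rpow_sub_one_rpow ha hβ hy.le

lemma gridCost_rpow_add_one {a β : ℝ} (ha : 1 < a) (hβ : 0 < β) :
    gridCost a β (a ^ (β + 1)) = (a ^ β - 1) / a ^ β := by
  have ha₀ : 0 < a := one_pos.trans ha
  have hX : 0 < a ^ β - 1 := by linarith [one_lt_rpow ha hβ]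
  have hroot : (a ^ (β + 1)) ^ (β / (β + 1)) = a ^ β := by
    rw [← rpow_mul ha₀.le, mul_div_cancel₀ _ (by linarith : β + 1 ≠ 0)]
  have hdiff : a ^ (β + 1) - a = a * (a ^ β - 1) := by
    rw [rpow_add ha₀, rpow_one]; ring
  rw [gridCost, hroot, hdiff, mul_rpow ha₀.le hX.le, mul_left_comm, ← rpow_add hX,
    add_neg_cancel_comm, rpow_one, rpow_neg ha₀.le, div_eq_inv_mul]

/-- Minimization of Section IV.B: for `a > 1`, `β > 0`, the function
`h(y) = (y^(β/(β+1)) - 1)^(β+1) (y - a)^(-β)` on `(a,∞)` is bounded below by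
`(a^β - 1)/a^β`, and this value is attained at `y = a^(β+1)`. -/
theorem grid_cost_min
    (a β : ℝ) (ha : 1 < a) (hβ : 0 < β) :
    (∀ y : ℝ, a < y →
      (y ^ (β / (β + 1)) - 1) ^ (β + 1) * (y - a) ^ (-β) ≥ (a ^ β - 1) / a ^ β) ∧
    ((a ^ (β + 1)) ^ (β / (β + 1)) - 1) ^ (β + 1) * (a ^ (β + 1) - a) ^ (-β) =
      (a ^ β - 1) / a ^ β :=
  ⟨fun _ hy => le_gridCost ha hβ hy, gridCost_rpow_add_one ha hβ⟩
end

section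
/- Let p ≥ 2 and M ≥ 1 be integers, set β = pM, let L ≥ 1 and x_0 ≥ 1 be real numbers with x_0 · L^{1/(p−1)} > 1, and fix ε ∈ (0,1). For C ∈ (0,1) define C_g(C) = (1 − C^{β/(β+1)})^{−β−1} (1/ε)^{pM} and C_c(C) = (x_0 L^{1/(p−1)})^{(1/ε)^{log_{1/C}(p)}}. Then C_g(C)/C_c(C) tends to 0 as C tends to 1 from the left (through C ∈ (0,1)). -/
set_option maxHeartbeats 1600000 in
/-- Remark 5.3: for a fixed accuracy `ε ∈ (0,1)`, the ratio of the complexities of the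
grid and the deterministic algorithms, viewed as functions of the contraction constant
`C ∈ (0,1)`, tends to `0` as `C → 1⁻`. -/
theorem grid_vs_deterministic_complexity_in_C
    (p M : ℕ) (hp : 2 ≤ p) (hM : 1 ≤ M)
    (β : ℝ) (hβ : β = (p * M : ℕ))
    (L x₀ : ℝ) (hL : 1 ≤ L) (hx₀ : 1 ≤ x₀)
    (hbase : 1 < x₀ * L ^ ((1 : ℝ) / ((p : ℝ) - 1)))
    (ε : ℝ) (hε0 : 0 < ε) (hε1 : ε < 1)
    (Cg Cc : ℝ → ℝ)
    (hCg : ∀ C : ℝ, Cg C = (1 - C ^ (β / (β + 1))) ^ (-β - 1) * (1 / ε) ^ (p * M : ℝ))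
    (hCc : ∀ C : ℝ, Cc C =
      (x₀ * L ^ ((1 : ℝ) / ((p : ℝ) - 1))) ^ ((1 / ε) ^ Real.logb (1 / C) p)) :
    Filter.Tendsto (fun C : ℝ => Cg C / Cc C)
      (nhdsWithin 1 (Set.Ioo 0 1)) (nhds 0) := by
  have hp1 : (1 : ℝ) < p := by
    have : (2 : ℝ) ≤ p := by exact_mod_cast hp
    linarith
  set A := x₀ * L ^ ((1 : ℝ) / ((p : ℝ) - 1)) with hAdef
  have hA : 1 < A := hbase
  have hA0 : (0 : ℝ) < A := lt_trans one_pos hA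
  have hβ2 : (2 : ℝ) ≤ β := by
    rw [hβ]
    have h2 : 2 ≤ p * M := le_trans hp (Nat.le_mul_of_pos_right p hM)
    exact_mod_cast h2
  have hβ0 : (0 : ℝ) < β := by linarith
  set γ := β / (β + 1) with hγdef
  have hγ0 : 0 < γ := div_pos hβ0 (by linarith)
  have hγ1 : γ ≤ 1 := by
    rw [hγdef, div_le_one (by linarith)]; linarith
  have hεinv : (1 : ℝ) < 1 / ε := by rw [lt_div_iff₀ hε0]; linarith
  have hεinv0 : (0 : ℝ) < 1 / ε := by linarith
  set E := (1 / ε) ^ ((p : ℝ) * (M : ℝ)) with hEdef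
  have hE0 : 0 < E := Real.rpow_pos_of_pos hεinv0 _
  have hlogp : 0 < Real.log p := Real.log_pos hp1
  have hlogε : 0 < Real.log (1 / ε) := Real.log_pos hεinv
  have hlogA : 0 < Real.log A := Real.log_pos hA
  set c₁ := Real.log p / 2 * Real.log (1 / ε) with hc₁def
  have hc₁ : 0 < c₁ := mul_pos (by linarith) hlogε
  set d := c₁ * Real.log A with hddef
  have hd : 0 < d := mul_pos hc₁ hlogA
  set K := γ ^ (-β - 1) * E with hKdef
  have hK0 : 0 < K := mul_pos (Real.rpow_pos_of_pos hγ0 _) hE0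
  -- eventually C ∈ Ioo (1/2) 1
  have hmem : ∀ᶠ C in nhdsWithin 1 (Set.Ioo (0:ℝ) 1), C ∈ Set.Ioo (1/2 : ℝ) 1 := by
    filter_upwards [eventually_mem_nhdsWithin,
      eventually_nhdsWithin_of_eventually_nhds
        (eventually_gt_nhds (by norm_num : (1/2 : ℝ) < 1))] with C h1 h2
    exact ⟨h2, h1.2⟩
  -- key pointwise bound
  have key : ∀ C ∈ Set.Ioo (1/2 : ℝ) 1,
      Cg C / Cc C ≤ K * ((1 - C)⁻¹ ^ (β + 1) * Real.exp (-(d * (1 - C)⁻¹))) := by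
    intro C hC
    obtain ⟨hChalf, hC1⟩ := hC
    have hC0 : (0 : ℝ) < C := by linarith
    have hs0 : (0 : ℝ) < 1 - C := by linarith
    -- Bernoulli : C ^ γ ≤ 1 - γ * (1 - C)
    have hBern : C ^ γ ≤ 1 - γ * (1 - C) := by
      have h := rpow_one_add_le_one_add_mul_self (s := C - 1) (by linarith) hγ0.le hγ1
      have he : 1 + (C - 1) = C := by ring
      rw [he] at h
      nlinarith [h]
    have h1C : γ * (1 - C) ≤ 1 - C ^ γ := by linarith
    have hγs : 0 < γ * (1 - C) := mul_pos hγ0 hs0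
    -- bound on Cg
    have hCgle : Cg C ≤ K * (1 - C) ^ (-β - 1) := by
      rw [hCg]
      have h2 : (1 - C ^ γ) ^ (-β - 1) ≤ (γ * (1 - C)) ^ (-β - 1) :=
        Real.rpow_le_rpow_of_nonpos hγs h1C (by linarith)
      have h3 : (γ * (1 - C)) ^ (-β - 1) = γ ^ (-β - 1) * (1 - C) ^ (-β - 1) :=
        Real.mul_rpow hγ0.le hs0.le
      calc (1 - C ^ γ) ^ (-β - 1) * E ≤ (γ * (1 - C)) ^ (-β - 1) * E :=
            mul_le_mul_of_nonneg_right h2 hE0.le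
        _ = K * (1 - C) ^ (-β - 1) := by rw [h3, hKdef]; ring
    -- bound on Cc
    have hlog1C : 0 < Real.log (1 / C) := Real.log_pos (by rw [lt_div_iff₀ hC0]; linarith)
    have hlogle : Real.log (1 / C) ≤ 2 * (1 - C) := by
      have h := Real.log_le_sub_one_of_pos (show (0:ℝ) < 1 / C by positivity)
      have h' : 1 / C - 1 ≤ 2 * (1 - C) := by
        rw [div_sub_one hC0.ne', div_le_iff₀ hC0]
        nlinarith
      linarith
    have hlb : Real.log p / 2 * (1 - C)⁻¹ ≤ Real.logb (1 / C) p := by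
      rw [Real.logb]
      have heq : Real.log p / 2 * (1 - C)⁻¹ = Real.log p / (2 * (1 - C)) := by
        field_simp
      rw [heq]
      gcongr
    have hXlb : Real.exp (c₁ * (1 - C)⁻¹) ≤ (1 / ε) ^ Real.logb (1 / C) p := by
      have h4 : (1 / ε) ^ (Real.log p / 2 * (1 - C)⁻¹) ≤ (1 / ε) ^ Real.logb (1 / C) p :=
        Real.rpow_le_rpow_of_exponent_le hεinv.le hlb
      have h5 : (1 / ε) ^ (Real.log p / 2 * (1 - C)⁻¹) =
          Real.exp (Real.log (1 / ε) * (Real.log p / 2 * (1 - C)⁻¹)) :=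
        Real.rpow_def_of_pos hεinv0 _
      rw [h5] at h4
      have heq : c₁ * (1 - C)⁻¹ = Real.log (1 / ε) * (Real.log p / 2 * (1 - C)⁻¹) := by
        rw [hc₁def]; ring
      rw [heq]; exact h4
    have hCcge : Real.exp (d * (1 - C)⁻¹) ≤ Cc C := by
      rw [hCc, Real.rpow_def_of_pos hA0]
      apply Real.exp_le_exp.mpr
      have hXge : c₁ * (1 - C)⁻¹ ≤ (1 / ε) ^ Real.logb (1 / C) p := by
        have := Real.add_one_le_exp (c₁ * (1 - C)⁻¹)
        linarith [hXlb]
      have heq : d * (1 - C)⁻¹ = Real.log A * (c₁ * (1 - C)⁻¹) := by rw [hddef]; ring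
      rw [heq]
      exact mul_le_mul_of_nonneg_left hXge hlogA.le
    -- combine
    have hCg0 : 0 ≤ Cg C := by
      rw [hCg]
      exact mul_nonneg (Real.rpow_nonneg (by linarith) _) hE0.le
    have hnn : 0 ≤ K * (1 - C) ^ (-β - 1) :=
      mul_nonneg hK0.le (Real.rpow_nonneg hs0.le _)
    have hfin := div_le_div₀ hnn hCgle (Real.exp_pos _) hCcge
    refine le_trans hfin (le_of_eq ?_)
    have hsp : (1 - C) ^ (-β - 1) = (1 - C)⁻¹ ^ (β + 1) := by
      rw [Real.inv_rpow hs0.le, ← Real.rpow_neg hs0.le]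
      congr 1
      ring
    rw [hsp, div_eq_mul_inv, ← Real.exp_neg]
    ring
  -- limit of the majorant
  have h1 : Filter.Tendsto (fun C : ℝ => 1 - C) (nhdsWithin 1 (Set.Ioo (0:ℝ) 1))
      (nhdsWithin 0 (Set.Ioi (0:ℝ))) := by
    apply tendsto_nhdsWithin_of_tendsto_nhds_of_eventually_within
    · have h : Filter.Tendsto (fun C : ℝ => 1 - C) (nhds 1) (nhds (1 - 1)) :=
        (continuous_const.sub continuous_id).tendsto 1
      simpa using h.mono_left nhdsWithin_le_nhds
    · filter_upwards [eventually_mem_nhdsWithin] with C hC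
      exact sub_pos.mpr hC.2
  have h2 : Filter.Tendsto (fun C : ℝ => (1 - C)⁻¹) (nhdsWithin 1 (Set.Ioo (0:ℝ) 1))
      Filter.atTop := tendsto_inv_nhdsGT_zero.comp h1
  have h3 : Filter.Tendsto (fun u : ℝ => u ^ (β + 1) * Real.exp (-(d * u)))
      Filter.atTop (nhds 0) := by
    have := tendsto_rpow_mul_exp_neg_mul_atTop_nhds_zero (β + 1) d hd
    simpa [neg_mul] using this
  have hRHS : Filter.Tendsto
      (fun C : ℝ => K * ((1 - C)⁻¹ ^ (β + 1) * Real.exp (-(d * (1 - C)⁻¹))))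
      (nhdsWithin 1 (Set.Ioo (0:ℝ) 1)) (nhds 0) := by
    have h4 := (h3.comp h2).const_mul K
    simpa using h4
  apply squeeze_zero' ?_ ?_ hRHS
  · filter_upwards [hmem] with C hC
    have hC0 : (0 : ℝ) < C := by linarith [hC.1]
    have hCγ : C ^ γ ≤ 1 := Real.rpow_le_one hC0.le hC.2.le hγ0.le
    have hCg0 : 0 ≤ Cg C := by
      rw [hCg]
      exact mul_nonneg (Real.rpow_nonneg (by linarith) _) hE0.le
    have hCc0 : 0 < Cc C := by
      rw [hCc]
      exact Real.rpow_pos_of_pos hA0 _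
    exact div_nonneg hCg0 hCc0.le
  · filter_upwards [hmem] with C hC
    exact key C hC
end
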